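/- Let A_m, B_m ⊆ Ω_{n_m} be two sequences of events. Suppose {A_m} is asymptotically noise sensitive and {B_m} is uniformly stable. Then lim_{m→∞} ( P[A_m ∩ B_m] − P[A_m] · P[B_m] ) = 0. -/
import Mathlib


namespace BKS

open Finset Filter

variable {ι : Type} [Fintype ι] [DecidableEq ι]

/-- Probability of an event under the uniform measure on `ι → Bool`. -/
noncomputable def cprob (A : Finset (ι → Bool)) : ℝ :=
  (A.card : ℝ) / 2 ^ Fintype.card ι

/-- Expectation of a function under the uniform measure on `ι → Bool`. -/
noncomputable def cexpect (f : (ι → Bool) → ℝ) : ℝ :=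
  (∑ x : ι → Bool, f x) / 2 ^ Fintype.card ι

/-- Real-valued indicator of an event. -/
noncomputable def indE (A : Finset (ι → Bool)) : (ι → Bool) → ℝ :=
  fun x => if x ∈ A then 1 else 0

/-- Transition kernel of the ε-noise: probability that `N_ε(x) = y`. -/
noncomputable def noiseKernel (ε : ℝ) (x y : ι → Bool) : ℝ :=
  ∏ j : ι, if y j = x j then 1 - ε else ε

/-- `P(N_ε(x) ∈ A | x)`. -/
noncomputable def condProb (ε : ℝ) (A : Finset (ι → Bool)) (x : ι → Bool) : ℝ :=
  ∑ y ∈ A, noiseKernel ε x y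

/-- Sensitivity gauge φ(A, ε) = inf{δ > 0 : P{x : |P(N_ε(x) ∈ A | x) − P(A)| > δ} < δ}. -/
noncomputable def gauge (ε : ℝ) (A : Finset (ι → Bool)) : ℝ :=
  sInf {δ : ℝ | 0 < δ ∧
    cprob (@Finset.filter _ (fun x => δ < |condProb ε A x - cprob A|)
      (Classical.decPred _) Finset.univ) < δ}

/-- Flip the `k`-th bit. -/
def flipBit (k : ι) (x : ι → Bool) : ι → Bool := Function.update x k (!x k)

/-- Influence of the `k`-th variable: `I_k(f) = E|f(σ_k x) − f(x)|`. -/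
noncomputable def influence (k : ι) (f : (ι → Bool) → ℝ) : ℝ :=
  cexpect fun x => |f (flipBit k x) - f x|

/-- `I(f) = Σ_k I_k(f)`. -/
noncomputable def totalInf (f : (ι → Bool) → ℝ) : ℝ := ∑ k : ι, influence k f

/-- `II(f) = Σ_k I_k(f)²`. -/
noncomputable def sqInf (f : (ι → Bool) → ℝ) : ℝ := ∑ k : ι, (influence k f) ^ 2

/-- `II(A)` for an event `A`. -/
noncomputable def sqInfE (A : Finset (ι → Bool)) : ℝ := sqInf (indE A)

/-- A monotone (upward closed) event. -/
def MonotoneEvent (A : Finset (ι → Bool)) : Prop :=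
  ∀ x y : ι → Bool, (∀ j, x j ≤ y j) → x ∈ A → y ∈ A

/-- Fourier–Walsh coefficient `f̂(S) = E[f · u_S]`, where `u_S(x) = (−1)^{|S ∩ x|}`. -/
noncomputable def walshFourier (f : (ι → Bool) → ℝ) (S : Finset ι) : ℝ :=
  cexpect fun x => f x * (-1 : ℝ) ^ (S.filter fun j => x j = true).card

/-- `Q_ε f (x) = E[f(N_ε(x))]`. -/
noncomputable def Qop (ε : ℝ) (f : (ι → Bool) → ℝ) (x : ι → Bool) : ℝ :=
  ∑ y : ι → Bool, noiseKernel ε x y * f y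

/-- `VAR(f, ε)`: variance of `x ↦ E[f(N_ε(x)) | x]`. -/
noncomputable def VAR (ε : ℝ) (f : (ι → Bool) → ℝ) : ℝ :=
  cexpect fun x => (Qop ε f x - cexpect (Qop ε f)) ^ 2

/-- `P[A △ N_ε A]`. -/
noncomputable def probSymmDiff (ε : ℝ) (A : Finset (ι → Bool)) : ℝ :=
  cexpect fun x => ∑ y : ι → Bool, noiseKernel ε x y *
    (if (x ∈ A) ↔ (y ∈ A) then 0 else 1)

/-- `P[A \ N_ε A]`. -/
noncomputable def probOffDiff (ε : ℝ) (A : Finset (ι → Bool)) : ℝ :=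
  cexpect fun x => ∑ y : ι → Bool, noiseKernel ε x y *
    (if x ∈ A ∧ y ∉ A then 1 else 0)

/-- Majority function on the set `K`: `M_K(x) = sign(Σ_{j∈K}(2x_j − 1))`. -/
noncomputable def majority (K : Finset ι) (x : ι → Bool) : ℝ :=
  Real.sign (∑ j ∈ K, (2 * (if x j then (1:ℝ) else 0) - 1))

/-- Weighted majority function `M_w(x) = sign(Σ_j (2x_j − 1) w_j)`. -/
noncomputable def wMajority (w : ι → ℝ) (x : ι → Bool) : ℝ :=
  Real.sign (∑ j : ι, (2 * (if x j then (1:ℝ) else 0) - 1) * w j)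

/-- The discrete cube Ω_n = {0,1}^n. -/
abbrev Cube (n : ℕ) := Fin n → Bool


lemma two_pow_pos : (0:ℝ) < 2 ^ Fintype.card ι := by positivity

lemma noiseKernel_nonneg {ε : ℝ} (h0 : 0 ≤ ε) (h1 : ε ≤ 1) (x y : ι → Bool) :
    0 ≤ noiseKernel ε x y := by
  apply Finset.prod_nonneg; intro j _; split <;> linarith

lemma noiseKernel_symm (ε : ℝ) (x y : ι → Bool) : noiseKernel ε x y = noiseKernel ε y x := by
  unfold noiseKernel
  exact Finset.prod_congr rfl fun j _ => if_congr eq_comm rfl rfl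

lemma sum_noiseKernel (ε : ℝ) (x : ι → Bool) :
    ∑ y : ι → Bool, noiseKernel ε x y = 1 := by
  unfold noiseKernel
  rw [← Fintype.piFinset_univ,
    ← Finset.prod_univ_sum (fun _ => (Finset.univ : Finset Bool))
      (fun j b => if b = x j then 1 - ε else ε)]
  refine Finset.prod_eq_one fun j _ => ?_
  rw [Fintype.sum_bool]
  cases h : x j <;> simp [h] <;> ring

lemma sum_indE (A : Finset (ι → Bool)) : ∑ x : ι → Bool, indE A x = A.card := by
  simp [indE]

lemma indE_nonneg (A : Finset (ι → Bool)) (x : ι → Bool) : 0 ≤ indE A x := by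
  unfold indE; split <;> norm_num

lemma indE_le_one (A : Finset (ι → Bool)) (x : ι → Bool) : indE A x ≤ 1 := by
  unfold indE; split <;> norm_num

lemma cprob_eq (A : Finset (ι → Bool)) :
    cprob A = (∑ x : ι → Bool, indE A x) / 2 ^ Fintype.card ι := by
  rw [cprob, sum_indE]

lemma cprob_nonneg (A : Finset (ι → Bool)) : 0 ≤ cprob A := by
  unfold cprob; positivity

lemma cprob_le_one (A : Finset (ι → Bool)) : cprob A ≤ 1 := by
  rw [cprob, div_le_one two_pow_pos]
  calc (A.card : ℝ) ≤ ((Finset.univ : Finset (ι → Bool)).card : ℝ) := by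
        exact_mod_cast Finset.card_le_card (Finset.subset_univ A)
    _ = 2 ^ Fintype.card ι := by
        rw [Finset.card_univ, Fintype.card_fun]; push_cast; norm_num

lemma cprob_mono {A B : Finset (ι → Bool)} (h : A ⊆ B) : cprob A ≤ cprob B := by
  have : (A.card : ℝ) ≤ B.card := by exact_mod_cast Finset.card_le_card h
  unfold cprob
  gcongr

lemma condProb_nonneg {ε : ℝ} (h0 : 0 ≤ ε) (h1 : ε ≤ 1) (A : Finset (ι → Bool))
    (x : ι → Bool) : 0 ≤ condProb ε A x :=
  Finset.sum_nonneg fun y _ => noiseKernel_nonneg h0 h1 x y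

lemma condProb_le_one {ε : ℝ} (h0 : 0 ≤ ε) (h1 : ε ≤ 1) (A : Finset (ι → Bool))
    (x : ι → Bool) : condProb ε A x ≤ 1 := by
  rw [condProb, ← sum_noiseKernel ε x]
  exact Finset.sum_le_sum_of_subset_of_nonneg (Finset.subset_univ A)
    (fun y _ _ => noiseKernel_nonneg h0 h1 x y)

lemma condProb_eq (ε : ℝ) (A : Finset (ι → Bool)) (x : ι → Bool) :
    condProb ε A x = ∑ y : ι → Bool, noiseKernel ε x y * indE A y := by
  rw [condProb]
  simp [indE, mul_ite, mul_one, mul_zero, Finset.sum_ite_mem, Finset.univ_inter]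

lemma abs_condProb_sub_le {ε : ℝ} (h0 : 0 ≤ ε) (h1 : ε ≤ 1) (A : Finset (ι → Bool))
    (x : ι → Bool) : |condProb ε A x - cprob A| ≤ 1 := by
  have h2 := condProb_nonneg h0 h1 A x
  have h3 := condProb_le_one h0 h1 A x
  have h4 := cprob_nonneg A
  have h5 := cprob_le_one A
  rw [abs_le]; constructor <;> linarith


lemma cprob_bad_lt {ε δ : ℝ} (h0 : 0 ≤ ε) (h1 : ε ≤ 1) (A : Finset (ι → Bool))
    (h : gauge ε A < δ) :
    cprob (@Finset.filter _ (fun x => δ < |condProb ε A x - cprob A|)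
      (Classical.decPred _) Finset.univ) < δ := by
  have hne : Set.Nonempty {δ : ℝ | 0 < δ ∧
      cprob (@Finset.filter _ (fun x => δ < |condProb ε A x - cprob A|)
        (Classical.decPred _) Finset.univ) < δ} := by
    refine ⟨2, by norm_num, ?_⟩
    have : (@Finset.filter _ (fun x => (2:ℝ) < |condProb ε A x - cprob A|)
        (Classical.decPred _) Finset.univ) = ∅ := by
      refine Finset.filter_false_of_mem fun x _ => ?_
      have := abs_condProb_sub_le h0 h1 A x
      push_neg
      linarith
    rw [this]
    simp [cprob]
  obtain ⟨δ₀, hδ₀S, hlt⟩ := exists_lt_of_csInf_lt hne h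
  obtain ⟨hδ₀pos, hδ₀⟩ := hδ₀S
  have hsub : (@Finset.filter _ (fun x => δ < |condProb ε A x - cprob A|)
      (Classical.decPred _) Finset.univ) ⊆
      (@Finset.filter _ (fun x => δ₀ < |condProb ε A x - cprob A|)
      (Classical.decPred _) Finset.univ) := by
    intro x hx
    rw [Finset.mem_filter] at hx ⊢
    exact ⟨hx.1, lt_trans hlt hx.2⟩
  calc cprob _ ≤ _ := cprob_mono hsub
    _ < δ₀ := hδ₀
    _ < δ := hlt

lemma key_bound {ε δ : ℝ} (h0 : 0 ≤ ε) (h1 : ε ≤ 1) (hδ : 0 ≤ δ)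
    (A B : Finset (ι → Bool)) :
    |cprob (A ∩ B) - cprob A * cprob B| ≤
      probSymmDiff ε B + δ + cprob (@Finset.filter _
        (fun x => δ < |condProb ε A x - cprob A|) (Classical.decPred _) Finset.univ) := by
  classical
  set N : ℝ := 2 ^ Fintype.card ι with hNdef
  have hN : 0 < N := two_pow_pos
  set K : (ι → Bool) → (ι → Bool) → ℝ := noiseKernel ε with hK
  set S0 : ℝ := ∑ x : ι → Bool, ∑ y : ι → Bool, K x y * (indE A x * indE B x) with hS0
  set S1 : ℝ := ∑ x : ι → Bool, ∑ y : ι → Bool, K x y * (indE A x * indE B y) with hS1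
  -- cprob (A ∩ B) = S0 / N
  have h0AB : cprob (A ∩ B) = S0 / N := by
    rw [cprob_eq (A ∩ B)]
    congr 1
    refine Finset.sum_congr rfl fun x _ => ?_
    rw [← Finset.sum_mul, sum_noiseKernel ε x, one_mul]
    by_cases hxA : x ∈ A <;> by_cases hxB : x ∈ B <;>
      simp [indE, hxA, hxB, Finset.mem_inter]
  -- S1 = ∑ x, indE B x * condProb ε A x
  have hS1eq : S1 = ∑ x : ι → Bool, indE B x * condProb ε A x := by
    rw [hS1, Finset.sum_comm]
    refine Finset.sum_congr rfl fun y _ => ?_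
    rw [condProb_eq, Finset.mul_sum]
    refine Finset.sum_congr rfl fun x _ => ?_
    rw [hK, noiseKernel_symm ε x y]
    ring
  -- bound 1
  have hb1 : |S0 / N - S1 / N| ≤ probSymmDiff ε B := by
    have hnum : |S0 - S1| ≤ ∑ x : ι → Bool, ∑ y : ι → Bool,
        K x y * (if (x ∈ B) ↔ (y ∈ B) then 0 else 1) := by
      rw [hS0, hS1, ← Finset.sum_sub_distrib]
      refine (Finset.abs_sum_le_sum_abs _ _).trans ?_
      refine Finset.sum_le_sum fun x _ => ?_
      rw [← Finset.sum_sub_distrib]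
      refine (Finset.abs_sum_le_sum_abs _ _).trans ?_
      refine Finset.sum_le_sum fun y _ => ?_
      have hKnn : 0 ≤ K x y := noiseKernel_nonneg h0 h1 x y
      have ha0 := indE_nonneg A x
      have ha1 := indE_le_one A x
      by_cases hx : x ∈ B <;> by_cases hy : y ∈ B <;>
        simp [indE, hx, hy] <;>
        split <;> simp [abs_of_nonneg, hKnn]
    rw [div_sub_div_same, abs_div, abs_of_pos hN, probSymmDiff, cexpect]
    gcongr
  -- bound 2
  have hb2 : |S1 / N - cprob A * cprob B| ≤ δ + cprob (@Finset.filter _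
      (fun x => δ < |condProb ε A x - cprob A|) (Classical.decPred _) Finset.univ) := by
    set bad := @Finset.filter _
      (fun x => δ < |condProb ε A x - cprob A|) (Classical.decPred _) Finset.univ with hbad
    have hdiff : S1 / N - cprob A * cprob B =
        (∑ x : ι → Bool, indE B x * (condProb ε A x - cprob A)) / N := by
      rw [hS1eq, cprob_eq B]
      rw [Finset.sum_congr rfl (fun (x : ι → Bool) _ =>
        mul_sub (indE B x) (condProb ε A x) (cprob A)), Finset.sum_sub_distrib]
      rw [sub_div, sub_right_inj, ← Finset.sum_mul, hNdef]
      ring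
    have hnum : |∑ x : ι → Bool, indE B x * (condProb ε A x - cprob A)| ≤
        N * δ + bad.card := by
      refine (Finset.abs_sum_le_sum_abs _ _).trans ?_
      have hpt : ∀ x : ι → Bool, |indE B x * (condProb ε A x - cprob A)| ≤
          δ + indE bad x := by
        intro x
        have hle1 := abs_condProb_sub_le h0 h1 A x
        have hb0 := indE_nonneg B x
        have hb1' := indE_le_one B x
        rw [abs_mul, abs_of_nonneg hb0]
        by_cases hx : x ∈ bad
        · have : indE bad x = 1 := by simp [indE, hx]
          rw [this]
          nlinarith [abs_nonneg (condProb ε A x - cprob A)]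
        · have h2 : ¬ (δ < |condProb ε A x - cprob A|) := by
            intro hc
            exact hx (Finset.mem_filter.mpr ⟨Finset.mem_univ x, hc⟩)
          push_neg at h2
          have : indE bad x = 0 := by simp [indE, hx]
          rw [this, add_zero]
          nlinarith [abs_nonneg (condProb ε A x - cprob A)]
      have hsum : ∑ x : ι → Bool, (δ + indE bad x) = N * δ + bad.card := by
        rw [Finset.sum_add_distrib, sum_indE, Finset.sum_const, Finset.card_univ,
          Fintype.card_fun, Fintype.card_bool, nsmul_eq_mul, hNdef]
        push_cast
        ring
      exact (Finset.sum_le_sum fun x _ => hpt x).trans hsum.le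
    rw [hdiff, abs_div, abs_of_pos hN, div_le_iff₀ hN]
    refine hnum.trans ?_
    have h2 : (0:ℝ) < 2 ^ Fintype.card ι := two_pow_pos
    rw [cprob, hNdef]
    field_simp
    ring_nf
    linarith
  have htri := abs_sub_le (cprob (A ∩ B)) (S1 / N) (cprob A * cprob B)
  rw [h0AB] at htri ⊢
  linarith

/-- Noise sensitive events are asymptotically uncorrelated with uniformly stable events. -/
theorem sensitive_uncorrelated_with_stable
    (n : ℕ → ℕ) (A B : ∀ m, Finset (Cube (n m)))
    (hA : ∀ ε : ℝ, 0 < ε → ε < 1/2 →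
        Tendsto (fun m => gauge ε (A m)) atTop (nhds 0))
    (hB : ∀ η : ℝ, 0 < η → ∃ ε₀ : ℝ, 0 < ε₀ ∧ ∀ ε : ℝ, 0 < ε → ε < ε₀ → ∀ m,
        probSymmDiff ε (B m) < η) :
    Tendsto (fun m => cprob (A m ∩ B m) - cprob (A m) * cprob (B m))
      atTop (nhds 0) := by
  rw [NormedAddCommGroup.tendsto_nhds_zero]
  intro η hη
  obtain ⟨ε₀, hε₀, hstab⟩ := hB (η / 3) (by linarith)
  set ε : ℝ := min (ε₀ / 2) (1 / 4) with hεdef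
  have hε0 : 0 < ε := lt_min (by linarith) (by norm_num)
  have hεhalf : ε < 1 / 2 := (min_le_right _ _).trans_lt (by norm_num)
  have hεlt : ε < ε₀ := (min_le_left _ _).trans_lt (by linarith)
  have hev : ∀ᶠ m in atTop, gauge ε (A m) < η / 6 :=
    (hA ε hε0 hεhalf).eventually_lt_const (by linarith)
  filter_upwards [hev] with m hm
  have hbad : cprob (@Finset.filter _
      (fun x => η / 6 < |condProb ε (A m) x - cprob (A m)|)
      (Classical.decPred _) Finset.univ) < η / 6 :=
    cprob_bad_lt hε0.le (by linarith) (A m) hm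
  have hkey := key_bound (ε := ε) (δ := η / 6) hε0.le (by linarith)
    (by linarith) (A m) (B m)
  have hsd : probSymmDiff ε (B m) < η / 3 := hstab ε hε0 hεlt m
  rw [Real.norm_eq_abs]
  calc |cprob (A m ∩ B m) - cprob (A m) * cprob (B m)|
      ≤ probSymmDiff ε (B m) + η / 6 + cprob (@Finset.filter _
        (fun x => η / 6 < |condProb ε (A m) x - cprob (A m)|)
        (Classical.decPred _) Finset.univ) := hkey
    _ < η := by linarith

end BKS
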